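/- arXiv:2203.12411 — 4 statements merged into one kernel-verified Lean document; each statement's English description precedes it below -/
import Mathlib

section
/- The function vectors of the 3^n - 1 nonzero strictly linear functions f_v(x) = v·x (dot product mod 3) from F_3^n to F_3, viewed as vectors in R^{3^n} (with entries the values 0,1,2 regarded as real numbers), together with the constant all-ones vector, form a linearly independent set over R. -/
/-!
Work over a field `K` of characteristic zero containing a primitive cube root of unity `ζ`.
Since `1`, `t ↦ t.val` and `t ↦ (-t).val` span all functions `ZMod 3 → K`, the span of the
family contains every function `x ↦ g (w ⬝ᵥ x)` of a single linear form: for `w ≠ 0` use the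
members indexed by `0`, `w` and `-w`. In particular it contains the characters
`x ↦ ζ ^ (w ⬝ᵥ x).val`, which are `3 ^ n` distinct characters and hence, by Dedekind's
independence theorem, span the `3 ^ n`-dimensional space of all functions. A spanning family of
`3 ^ n` vectors is independent; for `K = ℂ` this descends to the real vectors.
-/

open Submodule Set

lemma ZMod.exists_eq_add_mul_val_add_mul_val_neg {K : Type*} [Field K] [CharZero K]
    (g : ZMod 3 → K) : ∃ a b c : K, ∀ t, g t = a + b * t.val + c * (-t).val := by
  refine ⟨g 0, (2 * g 2 - g 1 - g 0) / 3, (2 * g 1 - g 2 - g 0) / 3, fun t => ?_⟩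
  obtain rfl | rfl | rfl : t = 0 ∨ t = 1 ∨ t = 2 := by revert t; decide
  · simp
  · rw [show (1 : ZMod 3).val = 1 from rfl, show (-1 : ZMod 3).val = 2 from rfl]; push_cast; ring
  · rw [show (2 : ZMod 3).val = 2 from rfl, show (-2 : ZMod 3).val = 1 from rfl]; push_cast; ring

variable {ι : Type*} [Fintype ι]

section Characters

variable {K : Type*} [Field K] {ζ : K}

def dotProductChar (hζ : IsPrimitiveRoot ζ 3) (w : ι → ZMod 3) : AddChar (ι → ZMod 3) K :=
  (AddChar.zmodChar 3 hζ.pow_eq_one).compAddMonoidHom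
    (AddMonoidHom.mk' (w ⬝ᵥ ·) (dotProduct_add w))

lemma dotProductChar_apply (hζ : IsPrimitiveRoot ζ 3) (w x : ι → ZMod 3) :
    dotProductChar hζ w x = ζ ^ (w ⬝ᵥ x).val := rfl

lemma dotProductChar_injective (hζ : IsPrimitiveRoot ζ 3) :
    Function.Injective (dotProductChar (ι := ι) hζ) := by
  classical
  intro v w h
  funext j
  have hj := DFunLike.congr_fun h (Pi.single j 1)
  simp only [dotProductChar_apply, dotProduct_single, mul_one] at hj
  exact ZMod.val_injective 3 (hζ.pow_inj (ZMod.val_lt _) (ZMod.val_lt _) hj)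

lemma span_range_dotProductChar (hζ : IsPrimitiveRoot ζ 3) :
    span K (range fun w : ι → ZMod 3 => ⇑(dotProductChar hζ w)) = ⊤ := by
  classical
  have hli : LinearIndependent K fun w : ι → ZMod 3 => ⇑(dotProductChar hζ w) :=
    (linearIndependent_monoidHom (Multiplicative (ι → ZMod 3)) K).comp
      (fun w => AddChar.toMonoidHomEquiv (dotProductChar hζ w))
      (AddChar.toMonoidHomEquiv.injective.comp (dotProductChar_injective hζ))
  exact hli.span_eq_top_of_card_eq_finrank (Module.finrank_fintype_fun_eq_card K).symm

end Characters

def linearFormValues (K : Type*) [One K] [NatCast K] (v x : ι → ZMod 3) : K :=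
  if v = 0 then 1 else ((v ⬝ᵥ x).val : K)

lemma algebraMap_comp_linearFormValues {F K : Type*} [CommSemiring F] [Semiring K] [Algebra F K]
    (v : ι → ZMod 3) : algebraMap F K ∘ linearFormValues F v = linearFormValues K v := by
  funext x
  simp only [Function.comp_apply, linearFormValues, apply_ite (algebraMap F K), map_one,
    map_natCast]

variable {K : Type*} [Field K] [CharZero K]

lemma comp_dotProduct_mem_span_linearFormValues (g : ZMod 3 → K) (w : ι → ZMod 3) :
    (fun x => g (w ⬝ᵥ x)) ∈ span K (range (linearFormValues K)) := by
  have mem (u : ι → ZMod 3) : linearFormValues K u ∈ span K (range (linearFormValues K)) :=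
    subset_span (mem_range_self u)
  by_cases hw : w = 0
  · have : (fun x => g (w ⬝ᵥ x)) = g 0 • linearFormValues K 0 := by
      funext x; simp [linearFormValues, hw]
    exact this ▸ smul_mem _ _ (mem 0)
  · obtain ⟨a, b, c, hg⟩ := ZMod.exists_eq_add_mul_val_add_mul_val_neg g
    have : (fun x => g (w ⬝ᵥ x)) = a • linearFormValues K 0 + b • linearFormValues K w
        + c • linearFormValues K (-w) := by
      funext x; simp [linearFormValues, hw, neg_dotProduct, hg]
    exact this ▸ add_mem (add_mem (smul_mem _ _ (mem 0)) (smul_mem _ _ (mem w)))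
      (smul_mem _ _ (mem (-w)))

theorem linearIndependent_linearFormValues {ζ : K} (hζ : IsPrimitiveRoot ζ 3) :
    LinearIndependent K (linearFormValues (ι := ι) K) := by
  classical
  refine linearIndependent_of_top_le_span_of_card_eq_finrank ?_
    (Module.finrank_fintype_fun_eq_card K).symm
  rw [← span_range_dotProductChar hζ, span_le]
  rintro _ ⟨w, rfl⟩
  exact comp_dotProduct_mem_span_linearFormValues (fun t => ζ ^ t.val) w

/-- The function vectors of the `3^n - 1` nonzero strictly linear functions
`f_v(x) = v ⬝ x` (mod 3), viewed in `ℝ^{3^n}` with values `{0,1,2} ⊆ ℝ`,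
together with the all-ones vector (indexed by `v = 0`), are linearly independent over `ℝ`. -/
theorem stmt0 (n : ℕ) :
    LinearIndependent ℝ
      (fun (v : Fin n → ZMod 3) (x : Fin n → ZMod 3) =>
        if v = 0 then (1 : ℝ) else ((∑ i, v i * x i : ZMod 3).val : ℝ)) := by
  show LinearIndependent ℝ (linearFormValues ℝ)
  rw [← linearIndependent_algebraMap_comp_iff (S := ℂ)]
  simp only [algebraMap_comp_linearFormValues]
  exact linearIndependent_linearFormValues (Complex.isPrimitiveRoot_exp 3 (by norm_num))
end

section
/- Suppose real numbers λ_v, indexed by nonzero v ∈ F_3^n, satisfy: for all x ∈ F_3^n, Σ_{v : v·x = 1} λ_v = 0 and Σ_{v : v·x = 2} λ_v = 0 (sums over nonzero v with the given mod-3 dot product condition). Then λ_v = 0 for all nonzero v. -/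
/-!
Let `ψ` be a primitive additive character of `ZMod 3` and extend `λ` by `λ₀ = 0`. The hypotheses
say that for every `x` only the fibre `v ⬝ᵥ x = 0` contributes to `∑ λ_v ψ(v ⬝ᵥ x)`, on which
`ψ = 1`; so the Fourier transform `x ↦ ∑ λ_v ψ(v ⬝ᵥ x)` is constant, and Fourier inversion
(orthogonality of the characters `x ↦ ψ(c ⬝ᵥ x)`) puts all the mass of `λ` at `v = 0`.
-/

open Finset

namespace AddChar

variable {ι R K : Type*} [Fintype ι] [CommRing R] [Fintype R] [Field K] {ψ : AddChar R K}

lemma IsPrimitive.sum_apply_dotProduct_eq_zero [DecidableEq ι] (hψ : ψ.IsPrimitive)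
    {c : ι → R} (hc : c ≠ 0) : ∑ x, ψ (c ⬝ᵥ x) = 0 := by
  obtain ⟨i, hi⟩ := Function.ne_iff.mp hc
  obtain ⟨a, ha⟩ := ne_one_iff.mp (hψ hi)
  let φ : AddChar (ι → R) K := ψ.compAddMonoidHom (AddMonoidHom.mk' (c ⬝ᵥ ·) (dotProduct_add c))
  refine sum_eq_zero_of_ne_one (ψ := φ) (ne_one_iff.mpr ⟨Pi.single i a, ?_⟩)
  simpa [φ, dotProduct_single] using ha

lemma IsPrimitive.eq_zero_of_sum_mul_apply_dotProduct_eq_const [DecidableEq ι] [CharZero K]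
    (hψ : ψ.IsPrimitive) {s : Finset (ι → R)} {μ : (ι → R) → K} {C : K}
    (h : ∀ x, ∑ v ∈ s, μ v * ψ (v ⬝ᵥ x) = C) {w : ι → R} (hws : w ∈ s) (hw : w ≠ 0) :
    μ w = 0 := by
  have hcard : (Fintype.card (ι → R) : K) ≠ 0 := Nat.cast_ne_zero.mpr Fintype.card_ne_zero
  have hshift : ∀ v x, ψ (-w ⬝ᵥ x) * (μ v * ψ (v ⬝ᵥ x)) = μ v * ψ ((v - w) ⬝ᵥ x) := by
    intro v x
    rw [sub_eq_add_neg, add_dotProduct, map_add_eq_mul]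
    ring
  have hsingle : ∀ v ∈ s, v ≠ w → μ v * ∑ x, ψ ((v - w) ⬝ᵥ x) = 0 := fun v _ hvw ↦ by
    rw [hψ.sum_apply_dotProduct_eq_zero (sub_ne_zero.mpr hvw), mul_zero]
  have hinversion : ∑ x, ψ (-w ⬝ᵥ x) * ∑ v ∈ s, μ v * ψ (v ⬝ᵥ x) = μ w * Fintype.card (ι → R) :=
    calc _ = ∑ v ∈ s, μ v * ∑ x, ψ ((v - w) ⬝ᵥ x) := by simp_rw [mul_sum, hshift]; exact sum_comm
      _ = μ w * ∑ x, ψ ((w - w) ⬝ᵥ x) := sum_eq_single_of_mem w hws hsingle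
      _ = μ w * Fintype.card (ι → R) := by simp [card_univ]
  have hzero : μ w * Fintype.card (ι → R) = 0 := by
    rw [← hinversion]
    simp_rw [h, ← sum_mul, hψ.sum_apply_dotProduct_eq_zero (neg_ne_zero.mpr hw), zero_mul]
  exact (mul_eq_zero.mp hzero).resolve_right hcard

lemma sum_mul_apply_eq_sum_of_fiber_sums_eq_zero [DecidableEq R] {α : Type*} (ψ : AddChar R K)
    (s : Finset α) (g : α → R) (μ : α → K) (h : ∀ t ≠ 0, ∑ v ∈ s with g v = t, μ v = 0) :
    ∑ v ∈ s, μ v * ψ (g v) = ∑ v ∈ s, μ v := by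
  rw [← sum_fiberwise s g, ← sum_fiberwise s g]
  refine sum_congr rfl fun t _ ↦ ?_
  rw [sum_congr rfl fun v hv ↦ by rw [(mem_filter.mp hv).2], ← sum_mul]
  rcases eq_or_ne t 0 with rfl | ht
  · simp
  · simp [h t ht]

theorem IsPrimitive.eq_zero_of_fiber_sums_dotProduct_eq_zero [DecidableEq ι] [DecidableEq R]
    [CharZero K] (hψ : ψ.IsPrimitive) {s : Finset (ι → R)} {μ : (ι → R) → K}
    (h : ∀ x, ∀ t ≠ 0, ∑ v ∈ s with v ⬝ᵥ x = t, μ v = 0) {w : ι → R} (hws : w ∈ s)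
    (hw : w ≠ 0) : μ w = 0 :=
  hψ.eq_zero_of_sum_mul_apply_dotProduct_eq_const
    (fun x ↦ sum_mul_apply_eq_sum_of_fiber_sums_eq_zero ψ s (· ⬝ᵥ x) μ (h x)) hws hw

end AddChar

/-- If the real numbers `λ_v` (for nonzero `v ∈ F_3^n`) satisfy, for every `x`,
`∑_{v ≠ 0, v⬝x = 1} λ_v = 0` and `∑_{v ≠ 0, v⬝x = 2} λ_v = 0`, then all `λ_v = 0`. -/
theorem stmt3 (n : ℕ) (lam : (Fin n → ZMod 3) → ℝ)
    (h1 : ∀ x : Fin n → ZMod 3,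
      ∑ v ∈ Finset.univ.filter
          (fun v : Fin n → ZMod 3 => v ≠ 0 ∧ ∑ i, v i * x i = 1), lam v = 0)
    (h2 : ∀ x : Fin n → ZMod 3,
      ∑ v ∈ Finset.univ.filter
          (fun v : Fin n → ZMod 3 => v ≠ 0 ∧ ∑ i, v i * x i = 2), lam v = 0) :
    ∀ v : Fin n → ZMod 3, v ≠ 0 → lam v = 0 := by
  intro w hw
  have hfiber : ∀ x, ∀ t : ZMod 3, t ≠ 0 →
      ∑ v ∈ univ.filter (· ≠ 0) with v ⬝ᵥ x = t, (lam v : ℂ) = 0 := by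
    intro x t ht
    rw [filter_filter, ← Complex.ofReal_sum, Complex.ofReal_eq_zero]
    fin_cases t
    · exact absurd rfl ht
    · exact h1 x
    · exact h2 x
  exact_mod_cast (ZMod.isPrimitive_stdAddChar 3).eq_zero_of_fiber_sums_dotProduct_eq_zero
    hfiber (by simpa) hw
end

section
/- Let ω = exp(2πi/3). For any row P_i ∈ F_3^n that is not the all-ones vector (1,...,1) and not the all-twos vector (2,...,2), the sum over nonzero x ∈ F_3^n of ω^{Σ_k x_k} · ((P_i · x) mod 3) equals 0, where (P_i · x) mod 3 ∈ {0,1,2} is regarded as a complex number and Σ_k x_k is the integer sum of the coordinates of x. -/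
open Complex Finset

noncomputable def ω3 : ℂ := Complex.exp (2 * Real.pi * Complex.I / 3)

lemma ω3_prim : IsPrimitiveRoot ω3 3 := by
  have h := Complex.isPrimitiveRoot_exp 3 (by norm_num)
  simpa [ω3] using h

lemma ω3_pow3 : ω3 ^ 3 = 1 := ω3_prim.pow_eq_one

lemma ω3_sum : 1 + ω3 + ω3 ^ 2 = 0 := by
  have h3 : ω3 ^ 3 = 1 := ω3_pow3
  have hne : ω3 ≠ 1 := ω3_prim.ne_one (by norm_num)
  have h : (ω3 - 1) * (ω3 ^ 2 + ω3 + 1) = 0 := by linear_combination h3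
  rcases mul_eq_zero.1 h with h | h
  · exact absurd (sub_eq_zero.1 h) hne
  · linear_combination h

noncomputable def ψ3 (a : ZMod 3) : ℂ := ω3 ^ a.val

lemma ψ3_zero : ψ3 0 = 1 := by simp [ψ3]

lemma ω3_pow_mod (m : ℕ) : ω3 ^ (m % 3) = ω3 ^ m := by
  conv_rhs => rw [← Nat.div_add_mod m 3, pow_add, pow_mul, ω3_pow3, one_pow, one_mul]

lemma ψ3_add (a b : ZMod 3) : ψ3 (a + b) = ψ3 a * ψ3 b := by
  simp only [ψ3, ← pow_add, ZMod.val_add, ω3_pow_mod]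

lemma ψ3_sum {ι : Type*} (s : Finset ι) (f : ι → ZMod 3) :
    ψ3 (∑ k ∈ s, f k) = ∏ k ∈ s, ψ3 (f k) := by
  induction s using Finset.cons_induction with
  | empty => simp [ψ3_zero]
  | cons a s ha ih => rw [Finset.sum_cons, Finset.prod_cons, ψ3_add, ih]

lemma sum_zmod3 (f : ZMod 3 → ℂ) : ∑ t : ZMod 3, f t = f 0 + f 1 + f 2 := by
  rw [show (univ : Finset (ZMod 3)) = {0, 1, 2} by decide]
  rw [Finset.sum_insert (by decide), Finset.sum_insert (by decide), Finset.sum_singleton,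
    ← add_assoc]

lemma sum_ψ3_mul (c : ZMod 3) (hc : c ≠ 0) : ∑ t : ZMod 3, ψ3 (c * t) = 0 := by
  have key : ∀ c : ZMod 3, c ≠ 0 → c = 1 ∨ c = 2 := by decide
  have e0 : ψ3 0 = 1 := ψ3_zero
  have e1 : ψ3 1 = ω3 := by
    simp only [ψ3]; rw [show (1 : ZMod 3).val = 1 by decide, pow_one]
  have e2 : ψ3 2 = ω3 ^ 2 := by
    simp only [ψ3]; rw [show (2 : ZMod 3).val = 2 by decide]
  rcases key c hc with rfl | rfl
  · rw [sum_zmod3]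
    norm_num [e0, e1, e2]
    linear_combination ω3_sum
  · rw [sum_zmod3]
    rw [show (2 * 0 : ZMod 3) = 0 by decide, show (2 * 1 : ZMod 3) = 2 by decide,
      show (2 * 2 : ZMod 3) = 1 by decide, e0, e1, e2]
    linear_combination ω3_sum

lemma char_sum {n : ℕ} (c : Fin n → ZMod 3) (hc : c ≠ 0) :
    ∑ x : Fin n → ZMod 3, ψ3 (∑ k, c k * x k) = 0 := by
  obtain ⟨k0, hk0⟩ : ∃ k, c k ≠ 0 := by
    by_contra h; push_neg at h; exact hc (funext fun k => h k)
  have step1 : ∑ x : Fin n → ZMod 3, ψ3 (∑ k, c k * x k)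
      = ∑ x : Fin n → ZMod 3, ∏ k, ψ3 (c k * x k) := by
    exact Finset.sum_congr rfl fun x _ => ψ3_sum _ _
  have step2 := Finset.prod_univ_sum (fun _ : Fin n => (univ : Finset (ZMod 3)))
    (fun k t => ψ3 (c k * t))
  rw [Fintype.piFinset_univ] at step2
  rw [step1, ← step2]
  exact Finset.prod_eq_zero (mem_univ k0) (sum_ψ3_mul _ hk0)

lemma val_decomp (c : ZMod 3) :
    ((c.val : ℕ) : ℂ) = 1 + (ω3 ^ 2 + 2 * ω3) / 3 * ψ3 c
      + (ω3 + 2 * ω3 ^ 2) / 3 * ψ3 (2 * c) := by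
  have hs := ω3_sum
  have h3 := ω3_pow3
  have hcases : ∀ a : ZMod 3, a = 0 ∨ a = 1 ∨ a = 2 := by decide
  rcases hcases c with rfl | rfl | rfl
  · simp [ψ3_zero, show (2 * 0 : ZMod 3) = 0 by decide]
    linear_combination -hs
  · rw [show ((1 : ZMod 3)).val = 1 by decide, show (2 * 1 : ZMod 3) = 2 by decide]
    rw [show ψ3 1 = ω3 by simp only [ψ3]; rw [show (1 : ZMod 3).val = 1 by decide, pow_one],
      show ψ3 2 = ω3 ^ 2 by simp only [ψ3]; rw [show (2 : ZMod 3).val = 2 by decide]]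
    push_cast
    linear_combination (-(2/3 : ℂ) - (2/3 : ℂ) * ω3) * h3 - (2/3 : ℂ) * hs
  · rw [show ((2 : ZMod 3)).val = 2 by decide, show (2 * 2 : ZMod 3) = 1 by decide]
    rw [show ψ3 1 = ω3 by simp only [ψ3]; rw [show (1 : ZMod 3).val = 1 by decide, pow_one],
      show ψ3 2 = ω3 ^ 2 by simp only [ψ3]; rw [show (2 : ZMod 3).val = 2 by decide]]
    push_cast
    linear_combination (-(4/3 : ℂ) - (1/3 : ℂ) * ω3) * h3 - (1/3 : ℂ) * hs

open Complex in
/-- For a row `P ∈ F_3^n` which is neither all-ones nor all-twos,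
`∑_{x ≠ 0} ω^{Σ_k x_k} ((P ⬝ x) mod 3) = 0`, where `ω = exp(2πi/3)`. -/
theorem stmt4 (n : ℕ) (P : Fin n → ZMod 3)
    (h1 : P ≠ fun _ => 1) (h2 : P ≠ fun _ => 2) :
    ∑ x ∈ Finset.univ.filter (fun x : Fin n → ZMod 3 => x ≠ 0),
        Complex.exp (2 * Real.pi * Complex.I / 3) ^ (∑ k, (x k).val)
          * ((∑ j, P j * x j : ZMod 3).val : ℂ) = 0 := by
  rcases Nat.eq_zero_or_pos n with rfl | hn
  · exact absurd (funext fun k => k.elim0) h1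
  have hfull : ∑ x ∈ Finset.univ.filter (fun x : Fin n → ZMod 3 => x ≠ 0),
      Complex.exp (2 * Real.pi * Complex.I / 3) ^ (∑ k, (x k).val)
        * ((∑ j, P j * x j : ZMod 3).val : ℂ)
      = ∑ x : Fin n → ZMod 3, ψ3 (∑ k, x k) * ((∑ j, P j * x j : ZMod 3).val : ℂ) := by
    rw [Finset.sum_filter]
    refine Finset.sum_congr rfl fun x _ => ?_
    by_cases hx : x = 0
    · subst hx; simp
    · rw [if_pos hx]
      congr 1
      rw [ψ3_sum]
      simp only [ψ3]
      rw [Finset.prod_pow_eq_pow_sum]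
      rfl
  rw [hfull]
  have hdec : ∀ x : Fin n → ZMod 3,
      ψ3 (∑ k, x k) * ((∑ j, P j * x j : ZMod 3).val : ℂ)
      = ψ3 (∑ k, (fun _ => (1 : ZMod 3)) k * x k)
        + (ω3 ^ 2 + 2 * ω3) / 3 * ψ3 (∑ k, (fun k => 1 + P k) k * x k)
        + (ω3 + 2 * ω3 ^ 2) / 3 * ψ3 (∑ k, (fun k => 1 + 2 * P k) k * x k) := by
    intro x
    have e1 : (∑ k, (1 + P k) * x k) = (∑ k, x k) + (∑ j, P j * x j) := by
      rw [← Finset.sum_add_distrib]; exact Finset.sum_congr rfl fun k _ => by ring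
    have e2 : (∑ k, (1 + 2 * P k) * x k) = (∑ k, x k) + 2 * (∑ j, P j * x j) := by
      rw [Finset.mul_sum, ← Finset.sum_add_distrib]
      exact Finset.sum_congr rfl fun k _ => by ring
    have e3 : (∑ k, (1 : ZMod 3) * x k) = ∑ k, x k := by simp
    simp only
    rw [e1, e2, e3, ψ3_add, ψ3_add, val_decomp]
    ring
  have hone : (fun _ : Fin n => (1 : ZMod 3)) ≠ 0 := by
    intro h
    exact one_ne_zero (congrFun h ⟨0, hn⟩)
  have ha : (fun k => 1 + P k) ≠ (0 : Fin n → ZMod 3) := by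
    intro h
    apply h2
    funext k
    have hk := congrFun h k
    have : ∀ a : ZMod 3, 1 + a = 0 → a = 2 := by decide
    exact this _ hk
  have hb : (fun k => 1 + 2 * P k) ≠ (0 : Fin n → ZMod 3) := by
    intro h
    apply h1
    funext k
    have hk := congrFun h k
    have : ∀ a : ZMod 3, 1 + 2 * a = 0 → a = 1 := by decide
    exact this _ hk
  calc ∑ x : Fin n → ZMod 3, ψ3 (∑ k, x k) * ((∑ j, P j * x j : ZMod 3).val : ℂ)
      = ∑ x : Fin n → ZMod 3, (ψ3 (∑ k, (fun _ => (1 : ZMod 3)) k * x k)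
        + (ω3 ^ 2 + 2 * ω3) / 3 * ψ3 (∑ k, (fun k => 1 + P k) k * x k)
        + (ω3 + 2 * ω3 ^ 2) / 3 * ψ3 (∑ k, (fun k => 1 + 2 * P k) k * x k)) :=
        Finset.sum_congr rfl fun x _ => hdec x
    _ = 0 := by
        rw [Finset.sum_add_distrib, Finset.sum_add_distrib, ← Finset.mul_sum, ← Finset.mul_sum,
          char_sum _ hone, char_sum _ ha, char_sum _ hb]
        ring
end

section
/- Let f : F_3^n → F_3 be the indicator-complement function f(0) = 0 and f(x) = 1 for x ≠ 0. Suppose P is an l×n matrix over F_3 and φ ∈ R^l are real numbers such that for every x ∈ F_3^n, the real number Σ_{i=0}^{l-1} ((P x)_i mod 3, as an integer in {0,1,2}) · φ_i is congruent to 3·f(x) modulo 9 (i.e., equals 3 f(x) + 9 k_x for integers k_x). If additionally no row of P equals (1,1,...,1) or (2,2,...,2), then a contradiction follows; i.e., no such φ exists. -/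
open Finset

private lemma key18 {V W : Type*} [Fintype V] [DecidableEq V] [Fintype W] [DecidableEq W]
    [AddCommGroup V] [AddCommGroup W]
    (Φ : V →+ W) (hs : Function.Surjective Φ) (F : W → ℝ) (hF : ∑ w, F w = 0) :
    ∑ x, F (Φ x) = 0 := by
  have hcard : ∀ w : W, (univ.filter fun x => Φ x = w).card
      = (univ.filter fun x => Φ x = 0).card := by
    intro w
    obtain ⟨c, hc⟩ := hs w
    apply Finset.card_bij (fun x _ => x - c)
    · intro x hx
      simp only [mem_filter, mem_univ, true_and] at hx ⊢
      simp [map_sub, hx, hc]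
    · intro x hx y hy h
      exact sub_left_injective h
    · intro y hy
      refine ⟨y + c, ?_, by simp⟩
      simp only [mem_filter, mem_univ, true_and] at hy ⊢
      simp [map_add, hy, hc]
  calc ∑ x, F (Φ x)
      = ∑ w ∈ univ.image (Φ : V → W), (univ.filter fun x => Φ x = w).card • F w :=
        Finset.sum_comp F (Φ : V → W)
    _ = ∑ w : W, (univ.filter fun x => Φ x = 0).card • F w := by
        rw [Finset.image_univ_of_surjective hs]
        exact Finset.sum_congr rfl fun w _ => by rw [hcard]
    _ = 0 := by rw [← Finset.smul_sum, hF, smul_zero]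

private lemma zmod3_sum (g : ZMod 3 → ℝ) : ∑ v, g v = g 0 + g 1 + g 2 := by
  have h : (univ : Finset (ZMod 3)) = {0, 1, 2} := by decide
  rw [h, Finset.sum_insert (by decide), Finset.sum_insert (by decide), Finset.sum_singleton]
  ring

private lemma phi_single {n : ℕ} (p : Fin n → ZMod 3) (j : Fin n) (c : ZMod 3) :
    (∑ m, p m * (Pi.single j c : Fin n → ZMod 3) m) = p j * c ∧
      (∑ m, (Pi.single j c : Fin n → ZMod 3) m) = c := by
  constructor
  · simp [Pi.single_apply, mul_ite, Finset.sum_ite_eq']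
  · simp [Pi.single_apply, Finset.sum_ite_eq']

private lemma row_sum18 {n : ℕ} (p : Fin n → ZMod 3) (j k : Fin n) (hjk : p j ≠ p k) :
    ∑ x : Fin n → ZMod 3,
      (if (∑ m, x m) = 0 then (2:ℝ) else -1) * (((∑ m, p m * x m : ZMod 3)).val : ℝ) = 0 := by
  set Φ : (Fin n → ZMod 3) →+ ZMod 3 × ZMod 3 :=
    AddMonoidHom.mk' (fun x => (∑ m, p m * x m, ∑ m, x m))
      (by
        intro x y
        simp [mul_add, Finset.sum_add_distrib, Prod.ext_iff]) with hΦ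
  have hd : p j - p k ≠ 0 := sub_ne_zero.mpr hjk
  have hjne : j ≠ k := fun h => hjk (by rw [h])
  have hs : Function.Surjective Φ := by
    rintro ⟨u, v⟩
    set xj : ZMod 3 := (u - p k * v) / (p j - p k) with hxj
    refine ⟨Pi.single j xj + Pi.single k (v - xj), ?_⟩
    have h1 := phi_single p j xj
    have h2 := phi_single p k (v - xj)
    have : Φ (Pi.single j xj + Pi.single k (v - xj))
        = (p j * xj + p k * (v - xj), xj + (v - xj)) := by
      rw [map_add]
      simp only [hΦ, AddMonoidHom.mk'_apply, Prod.mk_add_mk, h1.1, h1.2, h2.1, h2.2]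
    rw [this]
    refine Prod.ext ?_ (by ring)
    show p j * xj + p k * (v - xj) = u
    rw [hxj]
    field_simp
    ring
  have hF : ∑ w : ZMod 3 × ZMod 3,
      (if w.2 = 0 then (2:ℝ) else -1) * ((w.1.val : ℕ) : ℝ) = 0 := by
    rw [Fintype.sum_prod_type]
    have hv : ∑ v : ZMod 3, (if v = 0 then (2:ℝ) else -1) = 0 := by
      rw [zmod3_sum]
      norm_num [show (1:ZMod 3) ≠ 0 by decide, show (2:ZMod 3) ≠ 0 by decide]
    have hu : ∀ u : ZMod 3, ∑ v : ZMod 3,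
        (if v = 0 then (2:ℝ) else -1) * ((u.val : ℕ) : ℝ) = 0 := by
      intro u
      rw [← Finset.sum_mul, hv, zero_mul]
    exact Finset.sum_eq_zero fun u _ => hu u
  have := key18 Φ hs (fun w => (if w.2 = 0 then (2:ℝ) else -1) * ((w.1.val : ℕ) : ℝ)) hF
  simpa [hΦ] using this

private lemma total_sum18 {n : ℕ} (hn : 1 ≤ n) :
    ∑ x : Fin n → ZMod 3, (if (∑ m, x m) = 0 then (2:ℝ) else -1) = 0 := by
  set Φ : (Fin n → ZMod 3) →+ ZMod 3 :=
    AddMonoidHom.mk' (fun x => ∑ m, x m) (by intro x y; simp [Finset.sum_add_distrib]) with hΦ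
  have hs : Function.Surjective Φ := by
    intro v
    refine ⟨Pi.single ⟨0, hn⟩ v, ?_⟩
    simp [hΦ, Pi.single_apply, Finset.sum_ite_eq']
  have hF : ∑ v : ZMod 3, (if v = 0 then (2:ℝ) else -1) = 0 := by
    rw [zmod3_sum]
    norm_num [show (1:ZMod 3) ≠ 0 by decide, show (2:ZMod 3) ≠ 0 by decide]
  have := key18 Φ hs (fun v => if v = 0 then (2:ℝ) else -1) hF
  simpa [hΦ] using this

open Matrix in
/-- Key step of Proposition 2: let `f(0) = 0`, `f(x) = 1` for `x ≠ 0`. If `P` is an `l×n`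
matrix over `F_3`, `φ ∈ ℝ^l`, and for every `x` the real number
`Σ_i ((Px)_i mod 3) φ_i` equals `3 f(x) + 9 k_x` for some integer `k_x`, and no row of `P`
is all-ones or all-twos, then we get a contradiction. -/
theorem stmt18 (l n : ℕ) (hn : 1 ≤ n) (P : Matrix (Fin l) (Fin n) (ZMod 3)) (φ : Fin l → ℝ)
    (hrow : ∀ i : Fin l, (fun j => P i j) ≠ (fun _ => (1 : ZMod 3)) ∧
                         (fun j => P i j) ≠ (fun _ => (2 : ZMod 3)))
    (hcomp : ∀ x : Fin n → ZMod 3, ∃ k : ℤ,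
      ∑ i, ((P.mulVec x i).val : ℝ) * φ i
        = 3 * (if x = 0 then (0 : ℝ) else 1) + 9 * k) :
    False := by
  choose k hk using hcomp
  set a : (Fin n → ZMod 3) → ℝ := fun x => if (∑ m, x m) = 0 then (2:ℝ) else -1 with ha
  -- each row's weighted sum vanishes
  have hrowsum : ∀ i : Fin l, ∑ x : Fin n → ZMod 3, a x * ((P.mulVec x i).val : ℝ) = 0 := by
    intro i
    by_cases hc : ∀ j j' : Fin n, P i j = P i j'
    · -- constant row, must be zero
      have hcases : ∀ c : ZMod 3, c = 0 ∨ c = 1 ∨ c = 2 := by decide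
      have h0 : ∀ j, P i j = 0 := by
        rcases hcases (P i ⟨0, hn⟩) with h | h | h
        · intro j; rw [hc j ⟨0, hn⟩, h]
        · exact absurd (funext fun j => by rw [hc j ⟨0, hn⟩, h]) (hrow i).1
        · exact absurd (funext fun j => by rw [hc j ⟨0, hn⟩, h]) (hrow i).2
      have : ∀ x : Fin n → ZMod 3, P.mulVec x i = 0 := by
        intro x
        simp [Matrix.mulVec, dotProduct, h0]
      simp [this]
    · push_neg at hc
      obtain ⟨j, j', hjj⟩ := hc
      have := row_sum18 (fun j => P i j) j j' hjj
      simpa [ha, Matrix.mulVec, dotProduct] using this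
  have hTotal : ∑ x : Fin n → ZMod 3, a x = 0 := total_sum18 hn
  have ha0 : a 0 = 2 := by simp [ha]
  -- the combined sum, computed two ways
  have E1 : ∑ x : Fin n → ZMod 3, a x * (∑ i, ((P.mulVec x i).val : ℝ) * φ i) = 0 := by
    calc ∑ x : Fin n → ZMod 3, a x * (∑ i, ((P.mulVec x i).val : ℝ) * φ i)
        = ∑ x : Fin n → ZMod 3, ∑ i, (a x * ((P.mulVec x i).val : ℝ)) * φ i := by
          refine Finset.sum_congr rfl fun x _ => ?_
          rw [Finset.mul_sum]
          exact Finset.sum_congr rfl fun i _ => by ring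
      _ = ∑ i, ∑ x : Fin n → ZMod 3, (a x * ((P.mulVec x i).val : ℝ)) * φ i :=
          Finset.sum_comm
      _ = ∑ i, (∑ x : Fin n → ZMod 3, a x * ((P.mulVec x i).val : ℝ)) * φ i := by
          exact Finset.sum_congr rfl fun i _ => (Finset.sum_mul _ _ _).symm
      _ = 0 := Finset.sum_eq_zero fun i _ => by rw [hrowsum i, zero_mul]
  have hf : ∑ x : Fin n → ZMod 3, a x * (if x = 0 then (0:ℝ) else 1) = -2 := by
    have h1 : ∀ x : Fin n → ZMod 3,
        a x * (if x = 0 then (0:ℝ) else 1) = a x - (if x = 0 then a x else 0) := by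
      intro x; by_cases h : x = 0 <;> simp [h]
    rw [Finset.sum_congr rfl fun x _ => h1 x, Finset.sum_sub_distrib, hTotal,
      Finset.sum_ite_eq' Finset.univ (0 : Fin n → ZMod 3) a]
    simp [ha0]
  have hKcast : ((∑ x : Fin n → ZMod 3, (if (∑ m, x m) = 0 then (2:ℤ) else -1) * k x : ℤ) : ℝ)
      = ∑ x : Fin n → ZMod 3, a x * (k x : ℝ) := by
    push_cast
    refine Finset.sum_congr rfl fun x _ => ?_
    by_cases h : (∑ m, x m : ZMod 3) = 0 <;> simp [ha, h]
  have E2 : ∑ x : Fin n → ZMod 3, a x * (∑ i, ((P.mulVec x i).val : ℝ) * φ i)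
      = -6 + 9 * ((∑ x : Fin n → ZMod 3, (if (∑ m, x m) = 0 then (2:ℤ) else -1) * k x : ℤ) : ℝ) := by
    calc ∑ x : Fin n → ZMod 3, a x * (∑ i, ((P.mulVec x i).val : ℝ) * φ i)
        = ∑ x : Fin n → ZMod 3, a x * (3 * (if x = 0 then (0:ℝ) else 1) + 9 * k x) :=
          Finset.sum_congr rfl fun x _ => by rw [hk x]
      _ = 3 * (∑ x : Fin n → ZMod 3, a x * (if x = 0 then (0:ℝ) else 1))
            + 9 * (∑ x : Fin n → ZMod 3, a x * (k x : ℝ)) := by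
          rw [Finset.mul_sum, Finset.mul_sum, ← Finset.sum_add_distrib]
          exact Finset.sum_congr rfl fun x _ => by ring
      _ = _ := by rw [hf, hKcast]; ring
  have h0 : (0:ℝ) = -6
      + 9 * ((∑ x : Fin n → ZMod 3, (if (∑ m, x m) = 0 then (2:ℤ) else -1) * k x : ℤ) : ℝ) :=
    E1.symm.trans E2
  have h1 : (0:ℤ) = -6
      + 9 * (∑ x : Fin n → ZMod 3, (if (∑ m, x m) = 0 then (2:ℤ) else -1) * k x) := by
    exact_mod_cast h0
  obtain ⟨S, hS⟩ : ∃ S : ℤ,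
      S = ∑ x : Fin n → ZMod 3, (if (∑ m, x m) = 0 then (2:ℤ) else -1) * k x := ⟨_, rfl⟩
  rw [← hS] at h1
  omega
end
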